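/- For the unit Euclidean sphere S² ⊂ ℝ^{2,1} with Q = x² + y² − z², the generalized Gauss–Bonnet integral −(1/2π) ∫_{S²} (Q(ν))₋^{−3/2} dA, where ν is the Euclidean outer unit normal (so Q(ν(θ,φ)) = cos 2θ in spherical coordinates with latitude measured from the equator), equals χ(S²) = 2. Concretely, 2 ∫₀^{π/2} χ₁^{−3/2}(cos²θ − sin²θ) cos θ dθ = 2, where χ₁^{−3/2}(x) := −x₋^{−3/2} is the meromorphic regularization of −max(−x,0)^{−3/2} at s = −3/2. -/

import Mathlib

open Real MeasureTheory

/-- The pushforward density of the measure `cos θ dθ` on `(0, π/2)` under the map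
`θ ↦ Q(ν(θ)) = cos²θ − sin²θ = cos 2θ` (the value of the Lorentzian form `x²+y²−z²` on the
Euclidean outer unit normal of `S² ⊂ ℝ^{2,1}`, at latitude `θ`, with the azimuthal `2π`
integrated out): `φ(r) = √((1+r)/2) / (2√(1−r²))` for `r ∈ (−1,1)` and `0` otherwise. -/
noncomputable def sphereDensity : ℝ → ℝ := fun r =>
  if -1 < r ∧ r < 1 then Real.sqrt ((1 + r)/2) / (2 * Real.sqrt (1 - r^2)) else 0

noncomputable def GBg : ℝ → ℝ := fun x => -Real.sqrt x / (Real.sqrt 2 * (1 + Real.sqrt (1+x)))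

noncomputable def GBg' : ℝ → ℝ := fun x =>
  x ^ (-(1:ℝ)/2) * (-(1 / (2 * Real.sqrt 2 * (Real.sqrt (1+x) * (1 + Real.sqrt (1+x))))))

lemma sphereDensity_zero : sphereDensity 0 = Real.sqrt (1/2) / 2 := by
  norm_num [sphereDensity]

lemma cont_GBg : ContinuousOn GBg (Set.Icc (0:ℝ) 1) := by
  apply ContinuousOn.div
  · exact (Real.continuous_sqrt.neg).continuousOn
  · exact (continuous_const.mul (continuous_const.add
      (Real.continuous_sqrt.comp (continuous_const.add continuous_id)))).continuousOn
  · intro x _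
    positivity

lemma cont_h : ContinuousOn
    (fun x : ℝ => -(1 / (2 * Real.sqrt 2 * (Real.sqrt (1+x) * (1 + Real.sqrt (1+x))))))
    (Set.uIcc (0:ℝ) 1) := by
  apply ContinuousOn.neg
  apply ContinuousOn.div continuousOn_const
  · have hsq : Continuous (fun x : ℝ => Real.sqrt (1+x)) :=
      Real.continuous_sqrt.comp (continuous_const.add continuous_id)
    exact (continuous_const.mul (hsq.mul (continuous_const.add hsq))).continuousOn
  · intro x hx
    rw [Set.uIcc_of_le zero_le_one] at hx
    have h1 : (0:ℝ) < Real.sqrt (1+x) := Real.sqrt_pos.2 (by linarith [hx.1])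
    positivity

lemma intInt_GBg' : IntervalIntegrable GBg' volume 0 1 :=
  (intervalIntegral.intervalIntegrable_rpow' (by norm_num)).mul_continuousOn cont_h

lemma pointwise_eq {x : ℝ} (hx : x ∈ Set.Ioo (0:ℝ) 1) :
    x ^ (-(3:ℝ)/2) * (sphereDensity (-x) - sphereDensity 0) = GBg' x := by
  obtain ⟨hx0, hx1⟩ := hx
  have h1x : (0:ℝ) < 1 + x := by linarith
  have h1mx : (0:ℝ) < 1 - x := by linarith
  have hcond : (-1:ℝ) < -x ∧ -x < 1 := by constructor <;> linarith
  have hsd : sphereDensity (-x)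
      = Real.sqrt (1-x) / Real.sqrt 2 / (2 * (Real.sqrt (1-x) * Real.sqrt (1+x))) := by
    rw [sphereDensity, if_pos hcond]
    rw [show (1 + -x)/2 = (1-x)/2 by ring, show 1 - (-x)^2 = (1-x)*(1+x) by ring,
      Real.sqrt_div h1mx.le, Real.sqrt_mul h1mx.le]
  have hrp : x ^ (-(3:ℝ)/2) = (Real.sqrt x)⁻¹ * x⁻¹ := by
    rw [show (-(3:ℝ)/2) = -(1/2) + (-1) by norm_num, Real.rpow_add hx0,
      Real.rpow_neg hx0.le, Real.rpow_neg_one, ← Real.sqrt_eq_rpow]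
  have hrp2 : x ^ (-(1:ℝ)/2) = (Real.sqrt x)⁻¹ := by
    rw [show (-(1:ℝ)/2) = -(1/2) by norm_num, Real.rpow_neg hx0.le, ← Real.sqrt_eq_rpow]
  have hhalf : Real.sqrt (1/2) = 1 / Real.sqrt 2 := by
    rw [Real.sqrt_div (by norm_num : (0:ℝ) ≤ 1)]
    norm_num
  rw [hsd, sphereDensity_zero, hrp, hhalf, GBg', hrp2]
  have ha : (0:ℝ) < Real.sqrt x := Real.sqrt_pos.2 hx0
  have hb : (0:ℝ) < Real.sqrt (1+x) := Real.sqrt_pos.2 h1x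
  have hc : (0:ℝ) < Real.sqrt 2 := Real.sqrt_pos.2 (by norm_num)
  have hu : (0:ℝ) < Real.sqrt (1-x) := Real.sqrt_pos.2 h1mx
  have ha2 : Real.sqrt x ^ 2 = x := Real.sq_sqrt hx0.le
  have hb2 : Real.sqrt (1+x) ^ 2 = 1 + x := Real.sq_sqrt h1x.le
  have hc2 : Real.sqrt 2 ^ 2 = 2 := Real.sq_sqrt (by norm_num)
  set a := Real.sqrt x
  set b := Real.sqrt (1+x)
  set c := Real.sqrt 2
  set u := Real.sqrt (1-x)
  field_simp
  linear_combination (-1)*hb2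

lemma hasDeriv_GBg {x : ℝ} (hx : 0 < x) : HasDerivAt GBg (GBg' x) x := by
  have h1x : (0:ℝ) < 1 + x := by linarith
  have hs : HasDerivAt (fun y : ℝ => Real.sqrt (1+y)) (1/(2*Real.sqrt (1+x))) x := by
    have := (Real.hasDerivAt_sqrt (x := 1+x) (by positivity)).comp x
      ((hasDerivAt_id x).const_add 1)
    simpa [Function.comp_def] using this
  have hu : HasDerivAt (fun y : ℝ => -Real.sqrt y) (-(1/(2*Real.sqrt x))) x :=
    (Real.hasDerivAt_sqrt hx.ne').neg
  have hv : HasDerivAt (fun y : ℝ => Real.sqrt 2 * (1 + Real.sqrt (1+y)))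
      (Real.sqrt 2 * (1/(2*Real.sqrt (1+x)))) x := (hs.const_add 1).const_mul _
  have hb : (0:ℝ) < Real.sqrt (1+x) := Real.sqrt_pos.2 h1x
  have hc : (0:ℝ) < Real.sqrt 2 := Real.sqrt_pos.2 (by norm_num)
  have ha : (0:ℝ) < Real.sqrt x := Real.sqrt_pos.2 hx
  have hv0 : Real.sqrt 2 * (1 + Real.sqrt (1+x)) ≠ 0 := by positivity
  have := hu.div hv hv0
  convert this using 1
  · rfl
  · rfl
  · rfl
  have ha2 : Real.sqrt x ^ 2 = x := Real.sq_sqrt hx.le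
  have hb2 : Real.sqrt (1+x) ^ 2 = 1 + x := Real.sq_sqrt h1x.le
  have hc2 : Real.sqrt 2 ^ 2 = 2 := Real.sq_sqrt (by norm_num)
  have hrp : x ^ (-(1:ℝ)/2) = (Real.sqrt x)⁻¹ := by
    rw [show (-(1:ℝ)/2) = -(1/2) by norm_num, Real.rpow_neg hx.le, ← Real.sqrt_eq_rpow]
  simp only [GBg', hrp]
  set a := Real.sqrt x
  set b := Real.sqrt (1+x)
  set c := Real.sqrt 2
  field_simp
  linear_combination hb2 - ha2

lemma key_integral :
    (∫ x in Set.Ioi (0:ℝ), x ^ (-(3:ℝ)/2) * (sphereDensity (-x) - sphereDensity 0)) = -1 := by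
  set f : ℝ → ℝ := fun x => x ^ (-(3:ℝ)/2) * (sphereDensity (-x) - sphereDensity 0) with hf
  have hsplit : Set.Ioo (0:ℝ) 1 ∪ Set.Ici 1 = Set.Ioi 0 := Set.Ioo_union_Ici_eq_Ioi zero_lt_one
  have hIci_eq : ∀ x ∈ Set.Ici (1:ℝ), f x = -(Real.sqrt (1/2)/2) * x ^ (-(3:ℝ)/2) := by
    intro x hx
    have hz : sphereDensity (-x) = 0 := by
      rw [sphereDensity, if_neg]
      rintro ⟨h1, _⟩
      have : (1:ℝ) ≤ x := hx
      linarith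
    rw [hf]
    simp only
    rw [hz, sphereDensity_zero]
    ring
  have hIrpow : IntegrableOn (fun x : ℝ => x ^ (-(3:ℝ)/2)) (Set.Ioi 1) volume :=
    integrableOn_Ioi_rpow_of_lt (by norm_num) one_pos
  have hIci_int : IntegrableOn f (Set.Ici 1) volume := by
    have h2 : IntegrableOn (fun x : ℝ => -(Real.sqrt (1/2)/2) * x ^ (-(3:ℝ)/2))
        (Set.Ici 1) volume := by
      rw [integrableOn_Ici_iff_integrableOn_Ioi]
      exact hIrpow.const_mul _
    exact h2.congr_fun (fun x hx => (hIci_eq x hx).symm) measurableSet_Ici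
  have hIoo_int : IntegrableOn f (Set.Ioo 0 1) volume :=
    (intInt_GBg'.1.mono_set Set.Ioo_subset_Ioc_self).congr_fun
      (fun x hx => (pointwise_eq hx).symm) measurableSet_Ioo
  have hdisj : Disjoint (Set.Ioo (0:ℝ) 1) (Set.Ici 1) := by
    rw [Set.disjoint_left]
    rintro x ⟨_, h2⟩ h3
    exact absurd h3 (not_le.2 h2)
  rw [← hsplit, setIntegral_union hdisj measurableSet_Ici hIoo_int hIci_int]
  have hFTC : ∫ x in (0:ℝ)..1, GBg' x = GBg 1 - GBg 0 :=
    intervalIntegral.integral_eq_sub_of_hasDerivAt_of_le zero_le_one cont_GBg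
      (fun x hx => hasDeriv_GBg hx.1) intInt_GBg'
  have e1 : ∫ x in Set.Ioo (0:ℝ) 1, f x = GBg 1 - GBg 0 := by
    rw [setIntegral_congr_fun measurableSet_Ioo (fun x hx => pointwise_eq hx),
      ← integral_Ioc_eq_integral_Ioo, ← intervalIntegral.integral_of_le zero_le_one]
    exact hFTC
  have e2 : ∫ x in Set.Ici (1:ℝ), f x = -Real.sqrt (1/2) := by
    rw [setIntegral_congr_fun measurableSet_Ici hIci_eq, integral_Ici_eq_integral_Ioi,
      integral_const_mul, integral_Ioi_rpow_of_lt (by norm_num) one_pos]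
    rw [Real.one_rpow]
    ring
  rw [e1, e2]
  have hc : (0:ℝ) < Real.sqrt 2 := Real.sqrt_pos.2 (by norm_num)
  have hc2 : Real.sqrt 2 ^ 2 = 2 := Real.sq_sqrt (by norm_num)
  have hhalf : Real.sqrt (1/2) = 1 / Real.sqrt 2 := by
    rw [Real.sqrt_div (by norm_num : (0:ℝ) ≤ 1)]
    norm_num
  simp only [GBg, Real.sqrt_zero, Real.sqrt_one, hhalf]
  rw [show (1:ℝ) + 1 = 2 by norm_num, show (1:ℝ) + 0 = 1 by norm_num, Real.sqrt_one]
  set c := Real.sqrt 2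
  field_simp
  linear_combination 2*hc2


/-- the generalized Gauss–Bonnet integral
`−(1/2π) ∫_{S²} (Q(ν))₋^{−3/2} K dA = 2 ∫₀^{π/2} χ₁^{−3/2}(cos²θ−sin²θ) cos θ dθ`
for the unit Euclidean sphere `S² ⊂ ℝ^{2,1}` equals `χ(S²) = 2`.  Here
`χ₁^{−3/2}(x) = −x₋^{−3/2}` and the pairing of the one-sided homogeneous distribution
`x₋^{−3/2}` (defined for `−2 < s < −1` by `⟨x₋^s, φ dx⟩ = ∫₀^∞ x^s (φ(−x) − φ(0)) dx`,
regular at `s = −3/2`) with the pushforward density `φ = sphereDensity` of `cos θ dθ`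
under `θ ↦ cos 2θ` computes the pullback integral. -/
theorem gauss_bonnet_sphere_R21 :
    2 * (-(∫ x in Set.Ioi (0:ℝ),
        x ^ (-(3:ℝ)/2) * (sphereDensity (-x) - sphereDensity 0))) = 2 := by
  rw [key_integral]
  norm_num
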